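/- There exist absolute constants C, c > 0 with the following property: for all p ≠ q ∈ ℝ³ and all measurable functions u, v : ℝ³ → ℂ satisfying |u(x)| ≤ e^{−|x−p|} and |v(x)| ≤ e^{−|x−q|} for every x ∈ ℝ³, the potential φ_{uv} satisfies ‖φ_{uv}‖_{L^∞(ℝ³)} ≤ C e^{−c|p−q|}. -/

import Mathlib

open MeasureTheory Real

noncomputable section

abbrev E3 := EuclideanSpace ℝ (Fin 3)

/-- Newtonian potential of a complex density. -/
def phiC (f : E3 → ℂ) (x : E3) : ℂ :=
  (-(1 / (4 * π)) : ℝ) • ∫ y : E3, f y / (‖x - y‖ : ℂ)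

open Metric Set MeasureTheory.Measure

lemma integrable_of_radial {g : ℝ → ℝ} (hgm : Measurable g)
    (hg : IntegrableOn (fun r => g r * r ^ 2) (Set.Ioi (0:ℝ))) :
    Integrable (fun z : E3 => g ‖z‖) := by
  have hdim : Module.finrank ℝ E3 = 3 := by simp
  have h1 : Integrable (fun r : Ioi (0:ℝ) => g r.1) (Measure.volumeIoiPow 2) := by
    rw [Measure.volumeIoiPow,
      integrable_withDensity_iff ((measurable_subtype_coe.pow_const 2).ennreal_ofReal)
        (Filter.Eventually.of_forall fun _ => ENNReal.ofReal_lt_top)]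
    have : (fun r : Ioi (0:ℝ) => g r.1 * (ENNReal.ofReal (r.1 ^ 2)).toReal)
        = (fun r : ℝ => g r * r ^ 2) ∘ (Subtype.val) := by
      funext r
      simp [ENNReal.toReal_ofReal (sq_nonneg r.1)]
    rw [this, ← integrableOn_univ, ← Subtype.coe_preimage_self (Ioi (0:ℝ))]
    exact ((MeasurableEmbedding.subtype_coe measurableSet_Ioi).integrableOn_iff_comap
      (by rw [Subtype.range_coe])).mp hg
  have h2 : Integrable (fun x : sphere (0:E3) 1 × Ioi (0:ℝ) => g x.2.1)
      ((volume : Measure E3).toSphere.prod (Measure.volumeIoiPow 2)) := by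
    have := (integrable_const (1:ℝ) (μ := (volume : Measure E3).toSphere)).mul_prod h1
    simpa using this
  have hmp := (volume : Measure E3).measurePreserving_homeomorphUnitSphereProd
  rw [hdim] at hmp
  have h3 : Integrable ((fun x : sphere (0:E3) 1 × Ioi (0:ℝ) => g x.2.1) ∘
      (homeomorphUnitSphereProd E3)) ((volume : Measure E3).comap Subtype.val) :=
    (hmp.integrable_comp (hgm.comp
      (measurable_subtype_coe.comp measurable_snd)).aestronglyMeasurable).mpr h2
  have h4 : Integrable ((fun z : E3 => g ‖z‖) ∘ (Subtype.val : ({(0:E3)}ᶜ : Set E3) → E3))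
      ((volume : Measure E3).comap Subtype.val) := by
    refine h3.congr (Filter.Eventually.of_forall fun z => ?_)
    simp [homeomorphUnitSphereProd_apply_snd_coe]
  have h5 : IntegrableOn (fun z : E3 => g ‖z‖) ({(0:E3)}ᶜ) volume := by
    rw [(MeasurableEmbedding.subtype_coe
        (measurableSet_singleton (0:E3)).compl).integrableOn_iff_comap
      (by rw [Subtype.range_coe])]
    rwa [Subtype.coe_preimage_self, integrableOn_univ]
  rwa [IntegrableOn, MeasureTheory.restrict_compl_singleton] at h5

/-- The truncated Riesz kernel. -/
def Fball : E3 → ℝ := (Metric.ball (0:E3) 1).indicator (fun z => ‖z‖⁻¹)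

lemma Fball_nonneg (z : E3) : 0 ≤ Fball z :=
  Set.indicator_nonneg (fun z _ => inv_nonneg.mpr (norm_nonneg z)) z

lemma Fball_eq (z : E3) : Fball z = (Set.Iio (1:ℝ)).indicator (fun r => r⁻¹) ‖z‖ := by
  unfold Fball
  by_cases h : ‖z‖ < 1
  · rw [Set.indicator_of_mem (by simpa [mem_ball_zero_iff] using h),
      Set.indicator_of_mem (by simpa using h)]
  · rw [Set.indicator_of_notMem (by simpa [mem_ball_zero_iff] using h),
      Set.indicator_of_notMem (by simpa using h)]

lemma integrable_Fball : Integrable Fball := by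
  have : Fball = fun z : E3 => (Set.Iio (1:ℝ)).indicator (fun r => r⁻¹) ‖z‖ :=
    funext Fball_eq
  rw [this]
  apply integrable_of_radial (measurable_inv.indicator measurableSet_Iio)
  -- bound by the indicator of (0,1]
  have hmeas : AEStronglyMeasurable (fun r : ℝ =>
      (Set.Iio (1:ℝ)).indicator (fun r => r⁻¹) r * r ^ 2)
      (volume.restrict (Set.Ioi (0:ℝ))) :=
    ((measurable_inv.indicator measurableSet_Iio).mul
      ((measurable_id.pow_const 2))).aestronglyMeasurable
  have hG : IntegrableOn (fun _ : ℝ => (1:ℝ)) (Set.Ioc (0:ℝ) 1) volume :=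
    (integrableOn_const_iff (hC := by simp)).mpr (Or.inr (by simp))
  refine Integrable.mono' (hG.integrable_indicator measurableSet_Ioc).restrict hmeas ?_
  filter_upwards [ae_restrict_mem measurableSet_Ioi] with r hr
  rcases lt_or_ge r 1 with h1 | h1
  · rw [Set.indicator_of_mem (by simpa using h1)]
    have hr0 : (0:ℝ) < r := hr
    rw [Real.norm_eq_abs, abs_of_nonneg (by positivity)]
    have : r⁻¹ * r ^ 2 = r := by field_simp
    rw [this, Set.indicator_of_mem (by exact ⟨hr0, h1.le⟩)]
    exact h1.le
  · rw [Set.indicator_of_notMem (by simpa using h1)]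
    simpa using Set.indicator_nonneg (fun _ _ => zero_le_one) r

lemma integrable_expHalf : Integrable (fun z : E3 => Real.exp (-(‖z‖ / 2))) := by
  apply integrable_of_radial (g := fun r => Real.exp (-(r / 2))) (by fun_prop)
  have h := integrableOn_rpow_mul_exp_neg_mul_rpow (s := 2) (p := 1) (b := 1/2)
    (by norm_num) (by norm_num) (by norm_num)
  apply h.congr_fun _ measurableSet_Ioi
  intro r hr
  have hr0 : (0:ℝ) < r := hr
  show r ^ (2:ℝ) * rexp (-(1/2) * r ^ (1:ℝ)) = rexp (-(r / 2)) * r ^ 2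
  have h2 : r ^ (2:ℝ) = r ^ (2:ℕ) := by
    rw [← Real.rpow_natCast r 2]; norm_num
  have harg : -(1/2) * r ^ (1:ℝ) = -(r / 2) := by rw [Real.rpow_one]; ring
  rw [h2, harg, mul_comm]

/-- The uniform constant. -/
def K : ℝ := (∫ z : E3, Fball z) + ∫ z : E3, Real.exp (-(‖z‖ / 2))

lemma K_nonneg : 0 ≤ K :=
  add_nonneg (integral_nonneg Fball_nonneg)
    (integral_nonneg fun z => (Real.exp_pos _).le)

lemma key_kernel (a : E3) :
    Integrable (fun y : E3 => Real.exp (-(‖y‖ / 2)) / ‖a - y‖) ∧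
      (∫ y : E3, Real.exp (-(‖y‖ / 2)) / ‖a - y‖) ≤ K := by
  set f : E3 → ℝ := fun y => Real.exp (-(‖y‖ / 2)) / ‖a - y‖ with hf
  have hfnonneg : ∀ y, 0 ≤ f y := fun y => div_nonneg (Real.exp_pos _).le (norm_nonneg _)
  have hbound : ∀ y, f y ≤ Fball (a - y) + Real.exp (-(‖y‖ / 2)) := by
    intro y
    rcases lt_or_ge ‖a - y‖ 1 with h1 | h1
    · have hF : Fball (a - y) = ‖a - y‖⁻¹ :=
        Set.indicator_of_mem (by simpa [mem_ball_zero_iff] using h1) _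
      have : f y ≤ ‖a - y‖⁻¹ := by
        rcases eq_or_lt_of_le (norm_nonneg (a - y)) with h0 | h0
        · simp [hf, ← h0]
        · rw [hf, div_le_iff₀ h0, inv_mul_cancel₀ h0.ne']
          exact Real.exp_le_one_iff.mpr (neg_nonpos.mpr (by positivity))
      calc f y ≤ ‖a - y‖⁻¹ := this
        _ ≤ Fball (a - y) + Real.exp (-(‖y‖ / 2)) := by
            rw [hF]; exact le_add_of_nonneg_right (Real.exp_pos _).le
    · have : f y ≤ Real.exp (-(‖y‖ / 2)) := by
        rw [hf, div_le_iff₀ (lt_of_lt_of_le one_pos h1)]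
        nlinarith [Real.exp_pos (-(‖y‖ / 2))]
      exact this.trans (le_add_of_nonneg_left (Fball_nonneg _))
  have hG : Integrable (fun y : E3 => Fball (a - y) + Real.exp (-(‖y‖ / 2))) :=
    (integrable_Fball.comp_sub_left a).add integrable_expHalf
  have hfmeas : Measurable f := by
    apply Measurable.div
    · fun_prop
    · exact (measurable_const.sub measurable_id).norm
  constructor
  · refine Integrable.mono' hG hfmeas.aestronglyMeasurable ?_
    filter_upwards with y
    rw [Real.norm_eq_abs, abs_of_nonneg (hfnonneg y)]
    exact hbound y
  · calc (∫ y : E3, f y)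
        ≤ ∫ y : E3, (Fball (a - y) + Real.exp (-(‖y‖ / 2))) :=
          integral_mono_of_nonneg (Filter.Eventually.of_forall hfnonneg) hG
            (Filter.Eventually.of_forall hbound)
      _ = (∫ y : E3, Fball (a - y)) + ∫ y : E3, Real.exp (-(‖y‖ / 2)) :=
          integral_add (integrable_Fball.comp_sub_left a) integrable_expHalf
      _ = K := by rw [K, integral_sub_left_eq_self Fball volume a]

/-- the Newtonian potential of a product of two bumps centered at `p` and
`q` is exponentially small in `|p - q|`, uniformly in space. -/
theorem potential_of_separated_product_small :
    ∃ C > (0:ℝ), ∃ c > (0:ℝ), ∀ p q : E3, p ≠ q →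
      ∀ u v : E3 → ℂ, Measurable u → Measurable v →
        (∀ x, ‖u x‖ ≤ Real.exp (-‖x - p‖)) →
        (∀ x, ‖v x‖ ≤ Real.exp (-‖x - q‖)) →
        ∀ x, ‖phiC (fun y => u y * v y) x‖ ≤ C * Real.exp (-c * ‖p - q‖) := by
  have hK := K_nonneg
  have hπ := Real.pi_pos
  refine ⟨1 / (4 * π) * K + 1, by positivity, 1/2, by norm_num, ?_⟩
  intro p q _hpq u v _hu _hv hub hvb x
  -- the translated kernel
  set a : E3 := x - p with ha
  obtain ⟨hker_int, hker_le⟩ := key_kernel a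
  have hker_int' : Integrable (fun y : E3 => Real.exp (-(‖y - p‖ / 2)) / ‖x - y‖) := by
    have := hker_int.comp_sub_right p
    refine this.congr (Filter.Eventually.of_forall fun y => ?_)
    simp only [ha, sub_sub_sub_cancel_right]
  have hker_le' : (∫ y : E3, Real.exp (-(‖y - p‖ / 2)) / ‖x - y‖) ≤ K := by
    have heq : (∫ y : E3, Real.exp (-(‖y - p‖ / 2)) / ‖x - y‖)
        = ∫ y : E3, Real.exp (-(‖y‖ / 2)) / ‖a - y‖ := by
      rw [← integral_sub_right_eq_self (fun y : E3 => Real.exp (-(‖y‖ / 2)) / ‖a - y‖) p]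
      congr 1; funext y
      simp only [ha, sub_sub_sub_cancel_right]
    rw [heq]; exact hker_le
  -- pointwise bound on the integrand
  have hpt : ∀ y : E3, ‖u y * v y / (‖x - y‖ : ℂ)‖
      ≤ Real.exp (-(‖p - q‖ / 2)) * (Real.exp (-(‖y - p‖ / 2)) / ‖x - y‖) := by
    intro y
    have hnorm : ‖u y * v y / (‖x - y‖ : ℂ)‖ = ‖u y‖ * ‖v y‖ / ‖x - y‖ := by
      rw [norm_div, norm_mul, Complex.norm_real, norm_norm]
    rw [hnorm]
    have htri : ‖p - q‖ ≤ ‖y - p‖ + ‖y - q‖ := by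
      have := norm_sub_le (p - y) (q - y)
      simpa [norm_sub_rev, sub_sub_sub_cancel_right] using norm_sub_le_norm_sub_add_norm_sub p y q
    have hprod : ‖u y‖ * ‖v y‖ ≤ Real.exp (-(‖p - q‖ / 2)) * Real.exp (-(‖y - p‖ / 2)) := by
      calc ‖u y‖ * ‖v y‖ ≤ Real.exp (-‖y - p‖) * Real.exp (-‖y - q‖) :=
            mul_le_mul (hub y) (hvb y) (norm_nonneg _) (Real.exp_pos _).le
        _ = Real.exp (-‖y - p‖ + -‖y - q‖) := (Real.exp_add _ _).symm
        _ ≤ Real.exp (-(‖p - q‖ / 2) + -(‖y - p‖ / 2)) := by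
            apply Real.exp_le_exp.mpr
            have h0 := norm_nonneg (y - q)
            linarith
        _ = Real.exp (-(‖p - q‖ / 2)) * Real.exp (-(‖y - p‖ / 2)) := Real.exp_add _ _
    have hdiv : ‖u y‖ * ‖v y‖ / ‖x - y‖
        ≤ Real.exp (-(‖p - q‖ / 2)) * Real.exp (-(‖y - p‖ / 2)) / ‖x - y‖ := by
      rw [div_eq_mul_inv, div_eq_mul_inv]
      exact mul_le_mul_of_nonneg_right hprod (inv_nonneg.mpr (norm_nonneg _))
    exact hdiv.trans_eq (mul_div_assoc _ _ _)
  -- put everything together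
  calc ‖phiC (fun y => u y * v y) x‖
      = (1 / (4 * π)) * ‖∫ y : E3, u y * v y / (‖x - y‖ : ℂ)‖ := by
        rw [phiC, norm_smul, Real.norm_eq_abs, abs_neg, abs_of_pos (by positivity)]
    _ ≤ (1 / (4 * π)) * ∫ y : E3, ‖u y * v y / (‖x - y‖ : ℂ)‖ :=
        mul_le_mul_of_nonneg_left (norm_integral_le_integral_norm _) (by positivity)
    _ ≤ (1 / (4 * π)) * (Real.exp (-(‖p - q‖ / 2))
          * ∫ y : E3, Real.exp (-(‖y - p‖ / 2)) / ‖x - y‖) := by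
        refine mul_le_mul_of_nonneg_left ?_ (by positivity)
        calc (∫ y : E3, ‖u y * v y / (‖x - y‖ : ℂ)‖)
            ≤ ∫ y : E3, Real.exp (-(‖p - q‖ / 2))
                * (Real.exp (-(‖y - p‖ / 2)) / ‖x - y‖) :=
              integral_mono_of_nonneg
                (Filter.Eventually.of_forall fun y => norm_nonneg _)
                (hker_int'.const_mul _)
                (Filter.Eventually.of_forall hpt)
          _ = Real.exp (-(‖p - q‖ / 2))
                * ∫ y : E3, Real.exp (-(‖y - p‖ / 2)) / ‖x - y‖ :=
              integral_const_mul _ _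
    _ ≤ (1 / (4 * π)) * (Real.exp (-(‖p - q‖ / 2)) * K) := by
        refine mul_le_mul_of_nonneg_left ?_ (by positivity)
        exact mul_le_mul_of_nonneg_left hker_le' (Real.exp_pos _).le
    _ ≤ (1 / (4 * π) * K + 1) * Real.exp (-(1/2) * ‖p - q‖) := by
        have he : -(‖p - q‖ / 2) = -(1/2) * ‖p - q‖ := by ring
        rw [he, show (1 / (4 * π)) * (Real.exp (-(1/2) * ‖p - q‖) * K)
            = (1 / (4 * π) * K) * Real.exp (-(1/2) * ‖p - q‖) by ring]
        exact mul_le_mul_of_nonneg_right (le_add_of_nonneg_right zero_le_one)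
          (Real.exp_pos _).le

end
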